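/- Closed form of the recursive construction: for every i with 1 ≤ i ≤ g, one has c_i = ⌈i·f / g⌉, the cardinality of V_i equals c_i·g − i·f, and V_i is the suffix {g − (c_i·g − i·f) + 1, …, g} of G (interpreted as the empty set when c_i·g − i·f = 0). -/

import Mathlib

/-- The set of the `f` smallest elements of a finite set `S` of naturals. -/
def takeMin (S : Finset ℕ) (f : ℕ) : Finset ℕ :=
  ((S.sort (· ≤ ·)).take f).toFinset

/-- The pair `(V_i, c_i)` of Definition 1 of the paper: `V_0 = {1, …, g}`, `c_0 = 1`;
in Case I (`|V_{i-1}| ≥ f`), `F_i` is the set of the `f` smallest elements of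
`V_{i-1}`, `V_i = V_{i-1} \ F_i` and `c_i = c_{i-1}`; in Case II (`|V_{i-1}| < f`),
`H_i = {1, …, f - |V_{i-1}|}`, `V_i = {1, …, g} \ H_i` and `c_i = c_{i-1} + 1`. -/
def paperVc (g f : ℕ) : ℕ → Finset ℕ × ℕ
  | 0 => (Finset.Icc 1 g, 1)
  | (i + 1) =>
    let V := (paperVc g f i).1
    let c := (paperVc g f i).2
    if f ≤ V.card then
      (V \ takeMin V f, c)
    else
      (Finset.Icc 1 g \ Finset.Icc 1 (f - V.card), c + 1)

/-- The set `F_i` of Definition 1 of the paper (`i ≥ 1`): the `f` smallest elements of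
`V_{i-1}` in Case I, and `V_{i-1} ∪ H_i` in Case II. -/
def paperF (g f : ℕ) (i : ℕ) : Finset ℕ :=
  let V := (paperVc g f (i - 1)).1
  if f ≤ V.card then takeMin V f
  else V ∪ Finset.Icc 1 (f - V.card)

/-- `H_i` of Case II of Definition 1. -/
def paperH (g f : ℕ) (i : ℕ) : Finset ℕ :=
  Finset.Icc 1 (f - (paperVc g f (i - 1)).1.card)

/-! With `r_i = c_i g - i f`, induction on `i` shows `i f ≤ c_i g ≤ i f + g` and that `V_i` is
the suffix of `G` of length `r_i`: Case I deletes the `f` smallest elements of that suffix,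
Case II starts a new copy of `G` and leaves its suffix of length `r_{i-1} + g - f`. For `i ≥ 1`
either case even gives `r_i < g`, and `i f ≤ c_i g < i f + g` says exactly `c_i = ⌈i f / g⌉`. -/

open Finset

lemma takeMin_Ico (a n f : ℕ) (hfn : f ≤ n) : takeMin (Ico a (a + n)) f = Ico a (a + f) := by
  rw [← List.toFinset_range'_1, takeMin,
    (List.toFinset_sort _ (List.nodup_range' 1)).2 (List.pairwise_le_range' 1),
    List.take_range'_of_length_ge hfn, List.toFinset_range'_1]

lemma Icc_sdiff_takeMin_of_le {g r f : ℕ} (hrg : r ≤ g) (hfr : f ≤ r) :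
    Icc (g - r + 1) g \ takeMin (Icc (g - r + 1) g) f = Icc (g - (r - f) + 1) g := by
  have hIco : Icc (g - r + 1) g = Ico (g - r + 1) (g - r + 1 + r) := by
    ext x; simp only [mem_Icc, mem_Ico]; omega
  rw [hIco, takeMin_Ico _ _ _ hfr]
  ext x; simp only [mem_sdiff, mem_Ico, mem_Icc]; omega

lemma paperVc_succ_of_fst_eq_Icc {g f i r : ℕ} (hfg : f ≤ g) (hrg : r ≤ g)
    (hV : (paperVc g f i).1 = Icc (g - r + 1) g) :
    paperVc g f (i + 1) =
      if f ≤ r then (Icc (g - (r - f) + 1) g, (paperVc g f i).2)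
      else (Icc (g - (r + g - f) + 1) g, (paperVc g f i).2 + 1) := by
  have hcard : (paperVc g f i).1.card = r := by rw [hV, Nat.card_Icc]; omega
  rw [paperVc, hcard]
  split_ifs with hfr
  · rw [hV, Icc_sdiff_takeMin_of_le hrg hfr]
  · congr 1; ext x; simp only [mem_sdiff, mem_Icc]; omega

lemma Nat.ceil_natCast_div_eq {K : Type*} [Field K] [LinearOrder K] [IsStrictOrderedRing K]
    [FloorSemiring K] {a c g : ℕ} (h₁ : a ≤ c * g) (h₂ : c * g < a + g) :
    ⌈(a / g : K)⌉₊ = c := by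
  have hg : (0 : K) < g := by
    rcases Nat.eq_zero_or_pos g with rfl | hg
    · simp at h₁ h₂; omega
    · exact_mod_cast hg
  rcases c with _ | c
  · simp_all
  · rw [Nat.ceil_eq_iff (by omega), lt_div_iff₀ hg, div_le_iff₀ hg]
    constructor
    · norm_cast; rw [Nat.add_one_sub_one]; linarith [Nat.add_one_mul c g]
    · exact_mod_cast h₁

section
variable {g f : ℕ}

lemma paperVc_spec (hfg : f ≤ g) (i : ℕ) :
    i * f ≤ (paperVc g f i).2 * g ∧ (paperVc g f i).2 * g ≤ i * f + g ∧
      (paperVc g f i).1 = Icc (g - ((paperVc g f i).2 * g - i * f) + 1) g := by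
  induction i with
  | zero => simp [paperVc]
  | succ i ih =>
    obtain ⟨hlo, hhi, hV⟩ := ih
    rw [paperVc_succ_of_fst_eq_Icc hfg (by omega) hV]
    split_ifs <;> simp only [add_one_mul] <;> exact ⟨by omega, by omega, by congr 2; omega⟩

lemma paperVc_snd_mul_lt (hf : 1 ≤ f) (hfg : f ≤ g) (i : ℕ) :
    (paperVc g f (i + 1)).2 * g < (i + 1) * f + g := by
  obtain ⟨hlo, hhi, hV⟩ := paperVc_spec hfg i
  rw [paperVc_succ_of_fst_eq_Icc hfg (by omega) hV]
  split_ifs <;> simp only [add_one_mul] <;> omega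

end

theorem paperVc_closed_form_general (g f : ℕ) (hf : 1 ≤ f) (hfg : f ≤ g) (i : ℕ)
    (hi1 : 1 ≤ i) :
    (paperVc g f i).2 = ⌈(i * f : ℚ) / (g : ℚ)⌉₊ ∧
    (paperVc g f i).1.card = (paperVc g f i).2 * g - i * f ∧
    (paperVc g f i).1 =
      Finset.Icc (g - ((paperVc g f i).2 * g - i * f) + 1) g := by
  obtain ⟨hlo, -, hV⟩ := paperVc_spec hfg i
  obtain ⟨j, rfl⟩ := Nat.exists_eq_add_of_le' hi1
  have hlt := paperVc_snd_mul_lt hf hfg j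
  refine ⟨?_, by rw [hV, Nat.card_Icc]; omega, hV⟩
  exact_mod_cast (Nat.ceil_natCast_div_eq (K := ℚ) hlo hlt).symm

/-- Closed form of the recursive construction: for `1 ≤ i ≤ g`, `c_i = ⌈i f / g⌉`,
`|V_i| = c_i g - i f`, and `V_i` is the suffix `{g - (c_i g - i f) + 1, …, g}` of `G`
(empty when `c_i g - i f = 0`). -/
theorem paperVc_closed_form (g f : ℕ) (hf : 1 ≤ f) (hfg : f ≤ g) (i : ℕ)
    (hi1 : 1 ≤ i) (hig : i ≤ g) :
    (paperVc g f i).2 = ⌈(i * f : ℚ) / (g : ℚ)⌉₊ ∧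
    (paperVc g f i).1.card = (paperVc g f i).2 * g - i * f ∧
    (paperVc g f i).1 =
      Finset.Icc (g - ((paperVc g f i).2 * g - i * f) + 1) g :=
  paperVc_closed_form_general g f hf hfg i hi1
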